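/- arXiv:1412.4089 — 2 statements merged into one kernel-verified Lean document; each statement's English description precedes it below -/
import Mathlib

section
/- Let R be a K-subalgebra of K⟦x⟧ such that the quotient K⟦x⟧/R has finite length as an R-module. Then the set ℕ∖o(R) is finite and the length of the R-module K⟦x⟧/R equals the cardinality of ℕ∖o(R). -/
set_option synthInstance.maxHeartbeats 1000000
set_option maxHeartbeats 1000000

open PowerSeries

/-- The order of a formal power series: the least `i` such that the coefficient of `x^i`
is nonzero (junk value `0` for the zero series). -/
noncomputable def ord (K : Type*) [Field K] (f : PowerSeries K) : ℕ :=
  sInf {i | coeff i f ≠ 0}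

/-- The set of orders of nonzero elements of a subalgebra `R ⊆ K⟦x⟧`. -/
def oSet (K : Type*) [Field K] (R : Subalgebra K (PowerSeries K)) : Set ℕ :=
  {n | ∃ f ∈ R, f ≠ 0 ∧ ord K f = n}

/-- The quotient `K⟦x⟧/R` as an `R`-module. -/
def QuotMod (K : Type*) [Field K] (R : Subalgebra K (PowerSeries K)) :=
  PowerSeries K ⧸ LinearMap.range (Algebra.linearMap R (PowerSeries K))

noncomputable instance (K : Type*) [Field K] (R : Subalgebra K (PowerSeries K)) :
    AddCommGroup (QuotMod K R) :=
  inferInstanceAs (AddCommGroup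
    (PowerSeries K ⧸ LinearMap.range (Algebra.linearMap R (PowerSeries K))))

noncomputable instance (K : Type*) [Field K] (R : Subalgebra K (PowerSeries K)) :
    Module R (QuotMod K R) :=
  inferInstanceAs (Module R
    (PowerSeries K ⧸ LinearMap.range (Algebra.linearMap R (PowerSeries K))))

/-!
Filter `K⟦x⟧/R` by the images `V j` of `x^j K⟦x⟧`. If `j ∈ o(R)`, subtracting a multiple of an
element of `R` of order `j` shows `V (j+1) = V j`; if `j ∉ o(R)`, the class of `x^j` generates
`V j` modulo `V (j+1)` over the constants, so `V (j+1) ⋖ V j`.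
Since the module is Artinian the chain stabilises at some `V n`. An element `g ∈ R` of positive
order `d` then gives `V n = V (n+d) = g • V n`, so Nakayama's lemma yields `r ∈ 1 + gR` killing
`V n`; as `r` is a unit of `K⟦x⟧`, this forces `V n = 0`. Thus `V n ≤ ⋯ ≤ V 0 = ⊤`, with its
repeated terms removed, is a composition series with one step for each gap `j < n`, and every
gap is below `n`; Jordan–Hölder gives the length of all other composition series.
-/

theorem exists_compositionSeries_of_eq_or_isMaximal {X : Type*} [Lattice X]
    [JordanHolderLattice X] (V : ℕ → X) (p : ℕ → Prop) [DecidablePred p]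
    (h_eq : ∀ j, p j → V (j + 1) = V j)
    (h_max : ∀ j, ¬ p j → JordanHolderLattice.IsMaximal (V (j + 1)) (V j)) (n : ℕ) :
    ∃ s : CompositionSeries X, s.head = V n ∧ s.last = V 0 ∧
      s.length = Nat.count (fun j => ¬ p j) n := by
  induction n with
  | zero => exact ⟨RelSeries.singleton _ (V 0), rfl, rfl, rfl⟩
  | succ n ih =>
    obtain ⟨s, hhead, hlast, hlen⟩ := ih
    by_cases hp : p n
    · exact ⟨s, by rw [h_eq n hp, hhead], hlast, by simp [Nat.count_succ, hp, hlen]⟩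
    · exact ⟨s.cons (V (n + 1)) (hhead ▸ h_max n hp), RelSeries.head_cons _ _ _,
        by rw [RelSeries.last_cons, hlast], by simp [Nat.count_succ, hp, hlen]⟩

section

variable {K : Type*} [Field K]

theorem coe_ord {f : K⟦X⟧} (hf : f ≠ 0) : (ord K f : ℕ∞) = f.order := by
  refine (order_eq_nat.2 ⟨Nat.sInf_mem (exists_coeff_ne_zero_iff_ne_zero.2 hf), fun i hi => ?_⟩).symm
  exact not_not.1 (Nat.notMem_of_lt_sInf hi)

variable {R : Subalgebra K K⟦X⟧}

theorem mem_oSet_iff {j : ℕ} : j ∈ oSet K R ↔ ∃ g ∈ R, X ^ j ∣ g ∧ coeff j g ≠ 0 := by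
  constructor
  · rintro ⟨g, hg, hg0, rfl⟩
    obtain ⟨hcoeff, hlt⟩ := order_eq_nat.1 (coe_ord hg0).symm
    exact ⟨g, hg, X_pow_dvd_iff.2 hlt, hcoeff⟩
  · rintro ⟨g, hg, hdvd, hcoeff⟩
    have hg0 : g ≠ 0 := by rintro rfl; exact hcoeff (map_zero _)
    refine ⟨g, hg, hg0, Nat.cast_injective ((coe_ord hg0).trans ?_)⟩
    exact order_eq_nat.2 ⟨hcoeff, X_pow_dvd_iff.1 hdvd⟩

theorem X_pow_succ_dvd_sub_C_mul {j : ℕ} {f g : K⟦X⟧} (hf : X ^ j ∣ f) (hg : X ^ j ∣ g)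
    (hgj : coeff j g ≠ 0) : X ^ (j + 1) ∣ f - C (coeff j f / coeff j g) * g := by
  rw [X_pow_dvd_iff] at hf hg ⊢
  intro i hi
  rcases (Nat.lt_succ_iff_lt_or_eq.1 hi) with hi | rfl
  · simp [hf i hi, hg i hi]
  · simp [div_mul_cancel₀ _ hgj]

namespace QuotMod

noncomputable def mk (R : Subalgebra K K⟦X⟧) : K⟦X⟧ →ₗ[R] QuotMod K R :=
  (LinearMap.range (Algebra.linearMap R K⟦X⟧)).mkQ

theorem mk_surjective : Function.Surjective (mk R) := Submodule.mkQ_surjective _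

theorem mk_eq_zero_iff {f : K⟦X⟧} : mk R f = 0 ↔ f ∈ R := by
  refine (Submodule.Quotient.mk_eq_zero _).trans ⟨?_, fun hf => ⟨⟨f, hf⟩, rfl⟩⟩
  rintro ⟨r, rfl⟩
  exact r.2

theorem smul_mk (r : R) (f : K⟦X⟧) : r • mk R f = mk R (r * f) := by
  rw [← map_smul, Algebra.smul_def]
  rfl

noncomputable def filtration (R : Subalgebra K K⟦X⟧) (j : ℕ) : Submodule R (QuotMod K R) :=
  ((Ideal.span {(X : K⟦X⟧) ^ j}).restrictScalars R).map (mk R)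

theorem mem_filtration {j : ℕ} {q : QuotMod K R} :
    q ∈ filtration R j ↔ ∃ f, X ^ j ∣ f ∧ mk R f = q := by
  simp only [filtration, Submodule.mem_map, Submodule.restrictScalars_mem,
    Ideal.mem_span_singleton]

theorem mk_mem_filtration {j : ℕ} {f : K⟦X⟧} (hf : X ^ j ∣ f) : mk R f ∈ filtration R j :=
  mem_filtration.2 ⟨f, hf, rfl⟩

theorem filtration_zero : filtration R 0 = ⊤ :=
  eq_top_iff.2 fun q _ => by
    obtain ⟨f, rfl⟩ := mk_surjective q
    exact mk_mem_filtration (by simp)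

theorem filtration_antitone : Antitone (filtration R) := fun _ _ hjk q hq => by
  obtain ⟨f, hf, rfl⟩ := mem_filtration.1 hq
  exact mk_mem_filtration ((pow_dvd_pow X hjk).trans hf)


theorem filtration_le_of_mk_mem {j : ℕ} {P : Submodule R (QuotMod K R)}
    (hP : filtration R (j + 1) ≤ P) {g : K⟦X⟧} (hg : X ^ j ∣ g) (hgj : coeff j g ≠ 0)
    (hgP : mk R g ∈ P) : filtration R j ≤ P := fun q hq => by
  obtain ⟨f, hf, rfl⟩ := mem_filtration.1 hq
  set b := coeff j f / coeff j g
  have hdecomp : mk R f = mk R (f - C b * g) + algebraMap K R b • mk R g := by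
    rw [smul_mk, ← map_add]
    exact congrArg (mk R) (sub_add_cancel f (C b * g)).symm
  rw [hdecomp]
  exact P.add_mem (hP (mk_mem_filtration (X_pow_succ_dvd_sub_C_mul hf hg hgj)))
    (P.smul_mem _ hgP)

theorem filtration_succ_eq_of_mem_oSet {j : ℕ} (hj : j ∈ oSet K R) :
    filtration R (j + 1) = filtration R j := by
  obtain ⟨g, hgR, hg, hgj⟩ := mem_oSet_iff.1 hj
  exact (filtration_antitone j.le_succ).antisymm
    (filtration_le_of_mk_mem le_rfl hg hgj ((mk_eq_zero_iff.2 hgR).symm ▸ zero_mem _))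

theorem mem_oSet_of_filtration_succ_eq {j : ℕ} (h : filtration R (j + 1) = filtration R j) :
    j ∈ oSet K R := by
  obtain ⟨f, hf, hfX⟩ := mem_filtration.1 (h ▸ mk_mem_filtration (R := R) (dvd_refl (X ^ j)))
  refine mem_oSet_iff.2 ⟨X ^ j - f, ?_, dvd_sub dvd_rfl ((pow_dvd_pow X j.le_succ).trans hf), ?_⟩
  · rw [← mk_eq_zero_iff, map_sub, hfX, sub_self]
  · rw [map_sub, coeff_X_pow_self, X_pow_dvd_iff.1 hf j j.lt_succ_self, sub_zero]
    exact one_ne_zero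

theorem filtration_succ_covBy_of_notMem_oSet {j : ℕ} (hj : j ∉ oSet K R) :
    filtration R (j + 1) ⋖ filtration R j := by
  refine ⟨(filtration_antitone j.le_succ).lt_of_ne
    fun h => hj (mem_oSet_of_filtration_succ_eq h), fun P hP hPj => ?_⟩
  obtain ⟨q, hqP, hq⟩ := SetLike.exists_of_lt hP
  obtain ⟨f, hf, rfl⟩ := mem_filtration.1 (hPj.le hqP)
  have hfj : coeff j f ≠ 0 := fun h0 =>
    hq (mk_mem_filtration (X_pow_dvd_iff.2 fun i hi =>
      (Nat.lt_succ_iff_lt_or_eq.1 hi).elim (X_pow_dvd_iff.1 hf i) (· ▸ h0)))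
  exact hPj.not_ge (filtration_le_of_mk_mem hP.le hf hfj hqP)


theorem filtration_le_smul {n d : ℕ} {g : K⟦X⟧} (hgR : g ∈ R) (hg : X ^ d ∣ g)
    (hgd : coeff d g ≠ 0) (h : filtration R (n + d) = filtration R n) :
    filtration R n ≤ Ideal.span {(⟨g, hgR⟩ : R)} • filtration R n := fun q hq => by
  obtain ⟨u, rfl⟩ := hg
  have hu : IsUnit u := by
    refine isUnit_iff_constantCoeff.2 (isUnit_iff_ne_zero.2 ?_)
    rwa [← coeff_zero_eq_constantCoeff_apply, ← coeff_X_pow_mul u d 0, zero_add]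
  obtain ⟨v, huv⟩ := hu.exists_right_inv
  obtain ⟨f, ⟨m, rfl⟩, rfl⟩ := mem_filtration.1 (h ▸ hq)
  have hfactor : X ^ (n + d) * m = X ^ d * u * (X ^ n * (v * m)) := by
    rw [pow_add]
    linear_combination (-(X ^ n * X ^ d * m)) * huv
  rw [hfactor, ← smul_mk ⟨X ^ d * u, hgR⟩]
  exact Submodule.smul_mem_smul (Ideal.mem_span_singleton_self _)
    (mk_mem_filtration (dvd_mul_right _ _))

theorem filtration_eq_bot_of_le_smul {n : ℕ} {g : K⟦X⟧} (hgR : g ∈ R) (hg : constantCoeff g = 0)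
    (hfg : (filtration R n).FG)
    (h : filtration R n ≤ Ideal.span {(⟨g, hgR⟩ : R)} • filtration R n) :
    filtration R n = ⊥ := by
  obtain ⟨r, hr1, hr⟩ := Submodule.exists_sub_one_mem_and_smul_eq_zero_of_fg_of_le_smul _ _ hfg h
  obtain ⟨s, hs⟩ := Ideal.mem_span_singleton'.1 hr1
  have hrs : (r : K⟦X⟧) = 1 + s * g := by
    rw [eq_add_of_sub_eq' (congrArg Subtype.val hs).symm]
    rfl
  obtain ⟨v, hvr⟩ : IsUnit (r : K⟦X⟧) := by
    refine isUnit_iff_constantCoeff.2 ?_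
    simp [hrs, hg]
  refine eq_bot_iff.2 fun q hq => ?_
  obtain ⟨f, hf, rfl⟩ := mem_filtration.1 hq
  have hfr : mk R f = r • mk R (v.inv * f) := by
    rw [smul_mk, ← mul_assoc, ← hvr, v.val_inv, one_mul]
  rw [hfr, hr _ (mk_mem_filtration (hf.mul_left _))]
  exact zero_mem _

theorem exists_filtration_eq_bot [IsNoetherian R (QuotMod K R)] [IsArtinian R (QuotMod K R)] :
    ∃ n, filtration R n = ⊥ := by
  obtain ⟨n, hn⟩ := WellFoundedLT.antitone_chain_condition (filtration_antitone (R := R))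
  obtain ⟨g, hgR, hg, hgn⟩ := mem_oSet_iff.1 (mem_oSet_of_filtration_succ_eq
    ((hn (n + 1 + 1) (by omega)).symm.trans (hn (n + 1) (by omega))))
  refine ⟨n, filtration_eq_bot_of_le_smul hgR ?_ (IsNoetherian.noetherian _)
    (filtration_le_smul hgR hg hgn (hn _ (by omega)).symm)⟩
  exact X_dvd_iff.1 ((dvd_pow_self X n.succ_ne_zero).trans hg)

theorem mem_oSet_of_filtration_eq_bot {n j : ℕ} (hn : filtration R n = ⊥) (hj : n ≤ j) :
    j ∈ oSet K R := by
  have hbot {i : ℕ} (hi : n ≤ i) : filtration R i = ⊥ :=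
    le_bot_iff.1 (hn ▸ filtration_antitone hi)
  exact mem_oSet_of_filtration_succ_eq ((hbot (hj.trans j.le_succ)).trans (hbot hj).symm)

end QuotMod
end

/-- If `K⟦x⟧/R` has finite length as an `R`-module, then `ℕ ∖ o(R)` is finite and the
length of `K⟦x⟧/R` (i.e. the length of any/some composition series from `⊥` to `⊤` of its
submodule lattice) equals the cardinality of `ℕ ∖ o(R)`. -/
theorem stmt_1 (K : Type*) [Field K] (R : Subalgebra K (PowerSeries K))
    (h : IsFiniteLength R (QuotMod K R)) :
    (oSet K R)ᶜ.Finite ∧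
      (∃ s : CompositionSeries (Submodule R (QuotMod K R)),
        RelSeries.head s = ⊥ ∧ RelSeries.last s = ⊤ ∧ s.length = ((oSet K R)ᶜ).ncard) ∧
      (∀ s : CompositionSeries (Submodule R (QuotMod K R)),
        RelSeries.head s = ⊥ → RelSeries.last s = ⊤ → s.length = ((oSet K R)ᶜ).ncard) := by
  classical
  obtain ⟨_, _⟩ := isFiniteLength_iff_isNoetherian_isArtinian.mp h
  obtain ⟨c, hc⟩ := QuotMod.exists_filtration_eq_bot (R := R)
  have hgaps : (oSet K R)ᶜ = ↑({j ∈ Finset.range c | j ∉ oSet K R}) := by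
    ext j
    simpa using fun hj => lt_of_not_ge (mt (QuotMod.mem_oSet_of_filtration_eq_bot hc) hj)
  obtain ⟨s, hhead, hlast, hlen⟩ := exists_compositionSeries_of_eq_or_isMaximal
    (QuotMod.filtration R) (· ∈ oSet K R) (fun _ => QuotMod.filtration_succ_eq_of_mem_oSet)
    (fun _ => QuotMod.filtration_succ_covBy_of_notMem_oSet) c
  rw [hc] at hhead
  rw [QuotMod.filtration_zero] at hlast
  have hlen' : s.length = (oSet K R)ᶜ.ncard := by
    rw [hlen, hgaps, Set.ncard_coe_finset, Nat.count_eq_card_filter_range]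
  refine ⟨hgaps ▸ Finset.finite_toSet _, ⟨s, hhead, hlast, hlen'⟩, fun s' hhead' hlast' => ?_⟩
  rw [← hlen']
  exact (CompositionSeries.jordan_holder s' s (hhead'.trans hhead.symm)
    (hlast'.trans hlast.symm)).length_eq
end

section
/- With the context's notation, the set {f₁,…,f_s} is a basis of A = K[f₁,…,f_s] (i.e. d(A) = ⟨d(f₁),…,d(f_s)⟩) if and only if h_A equals the K-subalgebra of K[u,x] generated by u, h_{f₁},…,h_{f_s}. -/
set_option synthInstance.maxHeartbeats 1000000
set_option maxHeartbeats 1000000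

/-- The set of degrees of nonzero elements of a subalgebra `A ⊆ K[x]`. -/
def dSet (K : Type*) [Field K] (A : Subalgebra K (Polynomial K)) : Set ℕ :=
  {n | ∃ f ∈ A, f ≠ 0 ∧ f.natDegree = n}

/-- The quotient `K[x]/A` has finite length as an `A`-module. -/
def FiniteLengthQuotPoly (K : Type*) [Field K] (A : Subalgebra K (Polynomial K)) : Prop :=
  IsFiniteLength A (Polynomial K ⧸ LinearMap.range (Algebra.linearMap A (Polynomial K)))

/-- The homogenization `h_f ∈ K[u][x]` of a polynomial `f = Σ_{i≤p} cᵢ xⁱ` of degree `p`: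
`h_f = Σ_{i≤p} cᵢ u^{p−i} xⁱ`. Here `K[u,x]` is realized as `Polynomial (Polynomial K)`,
polynomials in `x` with coefficients in `K[u]`. -/
noncomputable def hpoly {K : Type*} [Field K] (f : Polynomial K) :
    Polynomial (Polynomial K) :=
  ∑ i ∈ f.support,
    Polynomial.monomial i (Polynomial.monomial (f.natDegree - i) (f.coeff i))

/-- `h_A`: the `K`-subalgebra of `K[u,x]` generated by `u` together with all `h_f` for
nonzero `f ∈ A`. -/
noncomputable def hAlg (K : Type*) [Field K] (A : Subalgebra K (Polynomial K)) :
    Subalgebra K (Polynomial (Polynomial K)) :=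
  Algebra.adjoin K
    (insert (Polynomial.C Polynomial.X)
      {g | ∃ fA ∈ A, fA ≠ 0 ∧ g = hpoly fA})

/-!
Setting `u = 0` in `h_g` leaves `lc(g) xᵖ` with `p = d(g)`. The monomials `u⁰ xᵖ` occurring in
an element of `K[u, h_{f₁}, …, h_{f_s}]` have `p ∈ ⟨d(f₁),…,d(f_s)⟩`, since this holds for the
generators and is preserved by sums and products; so `h_A = K[u, h_{f₁}, …, h_{f_s}]` forces
`d(A) ⊆ ⟨d(f₁),…,d(f_s)⟩`. Conversely, if `d(A)` is the semigroup, every `g ∈ A` has the same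
leading term as `c · F` with `F` a monic product of the `fᵢ`, so `h_F` lies in
`K[u, h_{f₁}, …, h_{f_s}]`, and `h_g = c h_F + u^k h_{g - cF}`; induction on the degree concludes.
-/

open Polynomial

section Homogenization

variable {K : Type*} [Field K]

lemma coeff_hpoly (g : K[X]) (i : ℕ) :
    (hpoly g).coeff i = monomial (g.natDegree - i) (g.coeff i) := by
  classical
  simp only [hpoly, finsetSum_coeff, coeff_monomial, Finset.sum_ite_eq' g.support i]
  split
  · rfl
  · rw [notMem_support_iff.mp ‹_›, map_zero]

lemma coeff_zero_coeff_hpoly_natDegree (g : K[X]) :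
    ((hpoly g).coeff g.natDegree).coeff 0 = g.leadingCoeff := by
  simp [coeff_hpoly]

@[simp]
lemma hpoly_zero : hpoly (0 : K[X]) = 0 := by
  simp [hpoly]

lemma hpoly_C (c : K) : hpoly (C c) = C (C c) := by
  ext i : 1
  rcases eq_or_ne i 0 with rfl | hi
  · simp [coeff_hpoly]
  · simp [coeff_hpoly, coeff_C, hi]

@[simp]
lemma hpoly_one : hpoly (1 : K[X]) = 1 := by
  simpa using hpoly_C (1 : K)

lemma hpoly_mul {g h : K[X]} (hg : g ≠ 0) (hh : h ≠ 0) :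
    hpoly (g * h) = hpoly g * hpoly h := by
  ext k : 1
  rw [coeff_hpoly, natDegree_mul hg hh, coeff_mul, map_sum, coeff_mul]
  refine Finset.sum_congr rfl fun x hx => ?_
  rw [coeff_hpoly, coeff_hpoly, monomial_mul_monomial]
  rcases eq_or_ne (g.coeff x.1 * h.coeff x.2) 0 with h0 | h0
  · rw [h0, map_zero, map_zero]
  · have h1 := le_natDegree_of_ne_zero (left_ne_zero_of_mul h0)
    have h2 := le_natDegree_of_ne_zero (right_ne_zero_of_mul h0)
    have hk : x.1 + x.2 = k := Finset.HasAntidiagonal.mem_antidiagonal.mp hx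
    rw [show g.natDegree + h.natDegree - k = (g.natDegree - x.1) + (h.natDegree - x.2) by omega]

lemma hpoly_C_mul (c : K) (g : K[X]) : hpoly (C c * g) = C (C c) * hpoly g := by
  rcases eq_or_ne c 0 with rfl | hc
  · simp
  rcases eq_or_ne g 0 with rfl | hg
  · simp
  rw [hpoly_mul (C_ne_zero.mpr hc) hg, hpoly_C]

lemma hpoly_add_of_degree_lt {a b : K[X]} (hab : b.degree < a.degree) :
    hpoly (a + b) = hpoly a + C (X ^ (a.natDegree - b.natDegree)) * hpoly b := by
  have hd : (a + b).natDegree = a.natDegree :=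
    natDegree_eq_of_degree_eq (degree_add_eq_left_of_degree_lt hab)
  ext k : 1
  rw [coeff_hpoly, hd, coeff_add, map_add, coeff_add, coeff_hpoly, coeff_C_mul, coeff_hpoly]
  congr 1
  rcases eq_or_ne (b.coeff k) 0 with h0 | h0
  · rw [h0, map_zero, map_zero, mul_zero]
  · have hb : b ≠ 0 := fun h => h0 (by simp [h])
    have h1 : k ≤ b.natDegree := le_natDegree_of_ne_zero h0
    have h2 : b.natDegree < a.natDegree := natDegree_lt_natDegree hb hab
    rw [X_pow_eq_monomial, monomial_mul_monomial, one_mul,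
      show a.natDegree - k = a.natDegree - b.natDegree + (b.natDegree - k) by omega]

end Homogenization

section Generators

variable {K : Type*} [Field K] {ι : Type*} (f : ι → K[X])

noncomputable abbrev homogAdjoin : Subalgebra K K[X][X] :=
  Algebra.adjoin K (insert (C X) (Set.range fun i => hpoly (f i)))

abbrev degreeClosure : AddSubmonoid ℕ :=
  AddSubmonoid.closure (Set.range fun j => (f j).natDegree)

lemma mem_degreeClosure_of_coeff_zero_coeff_ne_zero {H : K[X][X]} (hH : H ∈ homogAdjoin f)
    {p : ℕ} (hp : (H.coeff p).coeff 0 ≠ 0) : p ∈ degreeClosure f := by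
  induction hH using Algebra.adjoin_induction generalizing p with
  | mem x hx =>
    rcases hx with rfl | ⟨i, rfl⟩
    · rw [coeff_C] at hp
      split_ifs at hp <;> simp at hp
    · rw [coeff_hpoly, coeff_monomial] at hp
      split_ifs at hp
      · obtain rfl : p = (f i).natDegree :=
          le_antisymm (le_natDegree_of_ne_zero hp) (by omega)
        exact AddSubmonoid.subset_closure ⟨i, rfl⟩
      · exact absurd rfl hp
  | algebraMap r =>
    obtain rfl : p = 0 := by
      by_contra h
      simp [Polynomial.algebraMap_apply, coeff_C, h] at hp
    exact zero_mem _
  | add x y _ _ ihx ihy =>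
    rw [coeff_add, coeff_add] at hp
    by_cases h : (x.coeff p).coeff 0 = 0
    · exact ihy (by rwa [h, zero_add] at hp)
    · exact ihx h
  | mul x y _ _ ihx ihy =>
    rw [coeff_mul, finsetSum_coeff] at hp
    obtain ⟨v, hv, hv0⟩ := Finset.exists_ne_zero_of_sum_ne_zero hp
    rw [mul_coeff_zero] at hv0
    rw [← Finset.HasAntidiagonal.mem_antidiagonal.mp hv]
    exact add_mem (ihx (left_ne_zero_of_mul hv0)) (ihy (right_ne_zero_of_mul hv0))

lemma natDegree_mem_degreeClosure {g : K[X]} (hg : g ≠ 0) (hgH : hpoly g ∈ homogAdjoin f) :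
    g.natDegree ∈ degreeClosure f :=
  mem_degreeClosure_of_coeff_zero_coeff_ne_zero f hgH <| by
    rwa [coeff_zero_coeff_hpoly_natDegree, leadingCoeff_ne_zero]

lemma exists_monic_hpoly_mem_of_mem_degreeClosure (hmonic : ∀ i, (f i).Monic) {n : ℕ}
    (hn : n ∈ degreeClosure f) :
    ∃ F ∈ Algebra.adjoin K (Set.range f), F.Monic ∧ F.natDegree = n ∧
      hpoly F ∈ homogAdjoin f := by
  induction hn using AddSubmonoid.closure_induction with
  | mem x hx =>
    obtain ⟨i, rfl⟩ := hx
    exact ⟨f i, Algebra.subset_adjoin ⟨i, rfl⟩, hmonic i, rfl,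
      Algebra.subset_adjoin (Set.mem_insert_of_mem _ ⟨i, rfl⟩)⟩
  | zero => exact ⟨1, one_mem _, monic_one, natDegree_one, by simp⟩
  | add x y _ _ ihx ihy =>
    obtain ⟨F, hFA, hFm, rfl, hFH⟩ := ihx
    obtain ⟨G, hGA, hGm, rfl, hGH⟩ := ihy
    exact ⟨F * G, mul_mem hFA hGA, hFm.mul hGm, hFm.natDegree_mul hGm,
      hpoly_mul hFm.ne_zero hGm.ne_zero ▸ mul_mem hFH hGH⟩

lemma hpoly_mem_homogAdjoin {A : Subalgebra K K[X]} (hfA : ∀ i, f i ∈ A)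
    (hmonic : ∀ i, (f i).Monic)
    (hdeg : ∀ g ∈ A, g ≠ 0 → g.natDegree ∈ degreeClosure f) {g : K[X]} (hg : g ∈ A) :
    hpoly g ∈ homogAdjoin f := by
  induction hd : g.degree using WellFoundedLT.induction generalizing g with
  | ind d ih =>
    subst hd
    rcases eq_or_ne g 0 with rfl | hg0
    · simp
    obtain ⟨F, hFf, hFm, hFd, hFH⟩ :=
      exists_monic_hpoly_mem_of_mem_degreeClosure f hmonic (hdeg g hg hg0)
    have hFA : F ∈ A := Algebra.adjoin_le (Set.range_subset_iff.mpr hfA) hFf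
    set c := g.leadingCoeff
    have hc : c ≠ 0 := leadingCoeff_ne_zero.mpr hg0
    have hcF : g.degree = (C c * F).degree := by
      rw [degree_C_mul hc, degree_eq_natDegree hg0, degree_eq_natDegree hFm.ne_zero, hFd]
    have hlt : (g - C c * F).degree < (C c * F).degree :=
      hcF ▸ degree_sub_lt_left hcF hg0 (by simp [c, hFm.leadingCoeff])
    have hcFH : hpoly (C c * F) ∈ homogAdjoin f := by
      rw [hpoly_C_mul]
      exact mul_mem (Subalgebra.algebraMap_mem _ c) hFH
    have huH (k : ℕ) : C (X ^ k) ∈ homogAdjoin f := by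
      rw [map_pow]
      exact pow_mem (Algebra.subset_adjoin (Set.mem_insert _ _)) k
    have hrestH : hpoly (g - C c * F) ∈ homogAdjoin f :=
      ih _ (hcF ▸ hlt) (sub_mem hg (mul_mem (Subalgebra.algebraMap_mem A c) hFA)) rfl
    rw [← add_sub_cancel (C c * F) g, hpoly_add_of_degree_lt hlt]
    exact add_mem hcFH (mul_mem (huH _) hrestH)

end Generators

theorem stmt_13_general (K : Type*) [Field K] {s : ℕ} (f : Fin s → Polynomial K)
    (hmonic : ∀ i, (f i).Monic) :
    (dSet K (Algebra.adjoin K (Set.range f))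
        = ↑(AddSubmonoid.closure (Set.range fun j => (f j).natDegree))) ↔
      hAlg K (Algebra.adjoin K (Set.range f))
        = Algebra.adjoin K
            (insert (Polynomial.C Polynomial.X) (Set.range fun i => hpoly (f i))) := by
  constructor
  · intro hdS
    refine le_antisymm (Algebra.adjoin_le ?_) (Algebra.adjoin_mono (Set.insert_subset_insert ?_))
    · refine Set.insert_subset_iff.mpr ⟨Algebra.subset_adjoin (Set.mem_insert _ _), ?_⟩
      rintro _ ⟨g, hg, -, rfl⟩
      refine hpoly_mem_homogAdjoin f (A := Algebra.adjoin K (Set.range f))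
        (fun i => Algebra.subset_adjoin ⟨i, rfl⟩) hmonic
        (fun g hg hg0 => ?_) hg
      have hgd : g.natDegree ∈ dSet K (Algebra.adjoin K (Set.range f)) := ⟨g, hg, hg0, rfl⟩
      rwa [hdS] at hgd
    · rintro _ ⟨i, rfl⟩
      exact ⟨f i, Algebra.subset_adjoin ⟨i, rfl⟩, (hmonic i).ne_zero, rfl⟩
  · intro hH
    ext n
    constructor
    · rintro ⟨g, hg, hg0, rfl⟩
      have hgH : hpoly g ∈ hAlg K (Algebra.adjoin K (Set.range f)) :=
        Algebra.subset_adjoin (Set.mem_insert_of_mem _ ⟨g, hg, hg0, rfl⟩)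
      rw [hH] at hgH
      exact natDegree_mem_degreeClosure f hg0 hgH
    · intro hn
      obtain ⟨F, hFA, hFm, hFd, -⟩ := exists_monic_hpoly_mem_of_mem_degreeClosure f hmonic hn
      exact ⟨F, hFA, hFm.ne_zero, hFd⟩

/-- `{f₁,…,f_s}` is a basis of `A = K[f₁,…,f_s]` (i.e. `d(A) = ⟨d(f₁),…,d(f_s)⟩`) iff
`h_A` equals the `K`-subalgebra of `K[u,x]` generated by `u, h_{f₁},…,h_{f_s}`. -/
theorem stmt_13 (K : Type*) [Field K] {s : ℕ} (f : Fin s → Polynomial K)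
    (hmonic : ∀ i, (f i).Monic) (hdeg : ∀ i, 0 < (f i).natDegree)
    (hlen : FiniteLengthQuotPoly K (Algebra.adjoin K (Set.range f))) :
    (dSet K (Algebra.adjoin K (Set.range f))
        = ↑(AddSubmonoid.closure (Set.range fun j => (f j).natDegree))) ↔
      hAlg K (Algebra.adjoin K (Set.range f))
        = Algebra.adjoin K
            (insert (Polynomial.C Polynomial.X) (Set.range fun i => hpoly (f i))) :=
  stmt_13_general K f hmonic
end
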